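/- arXiv:1305.1260 — 3 statements merged into one kernel-verified Lean document; each statement's English description precedes it below -/
import Mathlib

section
/- The center of the group 1 + Γ(A) consists exactly of the elements 1 + Σ_{i=1}^{l} α_i (Ĉ_i − 2) + β Â b with α_1, …, α_l, β ∈ F, where l = (p−1)/2, Ĉ_i = a^i + a^{−i}, and Â = 1 + a + ⋯ + a^{p−1}. -/
noncomputable section

open MonoidAlgebra

abbrev Dg (p : ℕ) := DihedralGroup p

def aa (p : ℕ) : Dg p := DihedralGroup.r 1
def bb (p : ℕ) : Dg p := DihedralGroup.sr 0

abbrev FG (p : ℕ) (F : Type) [Field F] := MonoidAlgebra F (Dg p)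

/-- The cyclic subgroup `A = ⟨a⟩` of the dihedral group. -/
def Asub (p : ℕ) : Subgroup (Dg p) := Subgroup.zpowers (aa p)

/-- `Γ(A)` : the ideal of `FD_{2p}` generated by `{h - 1 : h ∈ A}`. -/
def gammaA (p : ℕ) (F : Type) [Field F] : Ideal (FG p F) :=
  Ideal.span ((fun h => (MonoidAlgebra.of F (Dg p) h : FG p F) - 1) '' (Asub p : Set (Dg p)))

/-- The set `1 + Γ(A)`. -/
def oneGamma (p : ℕ) (F : Type) [Field F] : Set (FG p F) :=
  {x | x - 1 ∈ gammaA p F}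

/-- The canonical involution `Σ x_g g ↦ Σ x_g g⁻¹`. -/
def invo (p : ℕ) (F : Type) [Field F] (x : FG p F) : FG p F :=
  MonoidAlgebra.ofCoeff (Finsupp.equivMapDomain (Equiv.inv (Dg p)) x.coeff)

/-- An element is a unitary unit if `x* = x⁻¹`. -/
def IsUnitary (p : ℕ) (F : Type) [Field F] (x : FG p F) : Prop :=
  x * invo p F x = 1 ∧ invo p F x * x = 1

/-- The set of unitary units of `FD_{2p}`. -/
def unitarySet (p : ℕ) (F : Type) [Field F] : Set (FG p F) := {x | IsUnitary p F x}

/-- The augmentation map. -/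
def aug (p : ℕ) (F : Type) [Field F] (x : FG p F) : F := x.coeff.sum fun _ c => c

/-- Membership in the group algebra `FA` of the subgroup `A`, viewed inside `FD_{2p}`. -/
def memFA (p : ℕ) (F : Type) [Field F] (x : FG p F) : Prop := ∀ g ∈ x.coeff.support, g ∈ Asub p

/-- `V_*(FA)`: unitary units of augmentation 1 supported on `A`. -/
def VstarFA (p : ℕ) (F : Type) [Field F] : Set (FG p F) :=
  {x | memFA p F x ∧ aug p F x = 1 ∧ IsUnitary p F x}

/-- `S_*(FA)`: symmetric units of augmentation 1 supported on `A`. -/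
def SstarFA (p : ℕ) (F : Type) [Field F] : Set (FG p F) :=
  {x | memFA p F x ∧ aug p F x = 1 ∧ IsUnit x ∧ invo p F x = x}

/-- The center of the group `1 + Γ(A)`. -/
def Zcen (p : ℕ) (F : Type) [Field F] : Set (FG p F) :=
  {x | x ∈ oneGamma p F ∧ ∀ y ∈ oneGamma p F, x * y = y * x}

/-- `Â = 1 + a + a² + ⋯ + a^{p-1}`. -/
def Ahat (p : ℕ) (F : Type) [Field F] : FG p F :=
  ∑ j ∈ Finset.range p, of F (Dg p) ((aa p) ^ j)

/-!
Let `x ∈ 1 + Γ(A)` be central there. Since `a - 1` and `b (a⁻¹ - 1)` lie in `Γ(A)`, `x` commutes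
with `a` and with `a⁻¹ b - b`. The first makes the coefficient of `a^j b` periodic in `j` with
period `2`, hence constant because `2` is invertible mod `p`; the second makes
`j ↦ x(a^j) - x(a^{-j})` periodic with period `1`, hence zero. The sign character
(`a ↦ 1`, `b ↦ -1`) vanishes on `Γ(A)`, and since the reflection coefficients add up to a
multiple of `p`, it forces `∑ⱼ x(a^j) = 1`; pairing `a^i` with `a^{-i}` then puts `x` in the
stated form. Conversely `Ĉᵢ` and `Â b` (the sum of all reflections) are class sums, hence central
in `FD_{2p}`, and `Â = ∑ⱼ (a^j - 1)` in characteristic `p` lies in `Γ(A)`.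
-/

open DihedralGroup

namespace MonoidAlgebra

variable {R G : Type*}

lemma coeff_mul_inv_eq_of_commute [Semiring R] [Group G] {x : R[G]} {g : G}
    (h : Commute x (of R G g)) (k : G) : x.coeff (k * g⁻¹) = x.coeff (g⁻¹ * k) := by
  simpa using congr_arg (fun y : R[G] => y.coeff k) h.eq

lemma mem_center_of_forall_commute_of [CommSemiring R] [Monoid G] {z : R[G]}
    (h : ∀ g, Commute (of R G g) z) : z ∈ Subalgebra.center R R[G] := by
  rw [Subalgebra.mem_center_iff]
  intro y
  induction y using MonoidAlgebra.induction_on with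
  | of g => exact (h g).eq
  | add x y hx hy => rw [add_mul, mul_add, hx, hy]
  | smul r x hx => rw [smul_mul_assoc, mul_smul_comm, hx]

end MonoidAlgebra

namespace ZMod

variable {n : ℕ} [NeZero n] {M : Type*}

lemma eq_of_periodic {f : ZMod n → M} {d : ZMod n} (hf : Function.Periodic f d) (hd : IsUnit d)
    (j k : ZMod n) : f j = f k := by
  have hstep : ((k - j) * d⁻¹).val • d = k - j := by
    rw [nsmul_eq_mul, ZMod.natCast_zmod_val, mul_assoc, ZMod.inv_mul_of_unit _ hd, mul_one]
  simpa [hstep] using (hf.nsmul ((k - j) * d⁻¹).val j).symm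

lemma sum_range_natCast [AddCommMonoid M] (g : ZMod n → M) :
    ∑ j ∈ Finset.range n, g j = ∑ i, g i :=
  Finset.sum_nbij' (↑) ZMod.val (by simp) (by simp [ZMod.val_lt])
    (fun j hj => ZMod.val_cast_of_lt (Finset.mem_range.1 hj)) (by simp) (by simp)

lemma sum_eq_add_sum_Icc [AddCommMonoid M] {l : ℕ} (hn : n = 2 * l + 1) (g : ZMod n → M) :
    ∑ m, g m = g 0 + ∑ i ∈ Finset.Icc 1 l, (g i + g (-i)) := by
  have hrefl : ∀ j ∈ Finset.range l,
      ((l + (l - 1 - j) + 1 : ℕ) : ZMod n) = -((j + 1 : ℕ) : ZMod n) := by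
    intro j hj
    rw [eq_neg_iff_add_eq_zero, ← Nat.cast_add, ZMod.natCast_eq_zero_iff]
    exact ⟨1, by simp at hj; omega⟩
  have hrange : Finset.range n = Finset.range (l + l + 1) := by rw [hn, two_mul]
  rw [← sum_range_natCast, hrange, Finset.sum_range_succ', Finset.sum_range_add,
    ← Finset.sum_range_reflect (fun j => g ((l + j + 1 : ℕ) : ZMod n)) l,
    Finset.sum_congr rfl (fun j hj => congrArg g (hrefl j hj)),
    ← Finset.Ico_add_one_right_eq_Icc, Finset.sum_Ico_eq_sum_range]
  simp [Finset.sum_add_distrib, add_comm]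

end ZMod

namespace DihedralGroup

variable {n : ℕ} {R : Type*}

lemma sum_univ [NeZero n] {M : Type*} [AddCommMonoid M] (f : DihedralGroup n → M) :
    ∑ g, f g = ∑ i, f (r i) + ∑ i, f (sr i) := by
  rw [← equivSum.symm.sum_comp, Fintype.sum_sum_type]
  rfl

lemma eq_sum_coeff_smul [NeZero n] [Semiring R] (x : R[DihedralGroup n]) :
    x = ∑ i, x.coeff (r i) • of R _ (r i) + ∑ i, x.coeff (sr i) • of R _ (sr i) := by
  conv_lhs => rw [← x.sum_coeff_single, Finsupp.sum_fintype _ _ (by simp), sum_univ]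
  simp

def sign (R : Type*) [Ring R] : DihedralGroup n →* R where
  toFun
    | r _ => 1
    | sr _ => -1
  map_one' := rfl
  map_mul' := by rintro (i | i) (j | j) <;> simp

@[simp] lemma sign_r (R : Type*) [Ring R] (i : ZMod n) : sign R (r i) = 1 := rfl
@[simp] lemma sign_sr (R : Type*) [Ring R] (i : ZMod n) : sign R (sr i) = -1 := rfl

lemma lift_sign_apply [NeZero n] [CommRing R] (x : R[DihedralGroup n]) :
    lift R R (DihedralGroup n) (sign R) x = ∑ i, x.coeff (r i) - ∑ i, x.coeff (sr i) := by
  rw [lift_apply, Finsupp.sum_fintype _ _ (by simp), sum_univ]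
  simp [sub_eq_add_neg]

def reflSum (R : Type*) [Semiring R] (n : ℕ) [NeZero n] : R[DihedralGroup n] :=
  ∑ i, of R _ (sr i)

lemma commute_of_reflSum [NeZero n] [Semiring R] (g : DihedralGroup n) :
    Commute (of R _ g) (reflSum R n) := by
  simp only [Commute, SemiconjBy, reflSum, Finset.mul_sum, Finset.sum_mul, ← map_mul]
  cases g with
  | r j =>
    simp only [r_mul_sr, sr_mul_r]
    exact (Equiv.sum_comp (Equiv.subRight j) (fun i => of R _ (sr i))).trans
      (Equiv.sum_comp (Equiv.addRight j) _).symm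
  | sr j =>
    simp only [sr_mul_sr]
    exact (Equiv.sum_comp (Equiv.subRight j) (fun i => of R _ (r i))).trans
      (Equiv.sum_comp (Equiv.subLeft j) _).symm

lemma commute_of_of_r_add_of_r_neg [Semiring R] (g : DihedralGroup n) (m : ZMod n) :
    Commute (of R _ g) (of R _ (r m) + of R _ (r (-m))) := by
  simp only [Commute, SemiconjBy, mul_add, add_mul, ← map_mul]
  cases g with
  | r j => simp only [r_mul_r, add_comm j]
  | sr j =>
    rw [sr_mul_r, sr_mul_r, r_mul_sr, r_mul_sr, sub_neg_eq_add, ← sub_eq_add_neg, add_comm]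

lemma coeff_sr_periodic [Semiring R] {x : R[DihedralGroup n]} (h : Commute x (of R _ (r 1))) :
    Function.Periodic (fun j => x.coeff (sr j)) 2 := by
  intro j
  have := coeff_mul_inv_eq_of_commute h (sr (j + 1))
  simp only [inv_r, sr_mul_r, r_mul_sr] at this
  convert this.symm using 3 <;> ring

lemma coeff_r_sub_coeff_r_neg_periodic [CommRing R] {x : R[DihedralGroup n]}
    (h : Commute x (of R _ (sr (-1)) - of R _ (sr 0))) :
    Function.Periodic (fun m => x.coeff (r m) - x.coeff (r (-m))) 1 := by
  intro m
  have := congr_arg (fun y : R[DihedralGroup n] => y.coeff (sr m)) h.eq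
  simp only [mul_sub, sub_mul, coeff_sub, Finsupp.sub_apply, of_apply, coeff_mul_single_apply,
    coeff_single_mul_apply, inv_sr, sr_mul_sr, mul_one, one_mul] at this
  rw [show (-1 - m : ZMod n) = -(m + 1) by ring, zero_sub, sub_zero, sub_neg_eq_add] at this
  linear_combination -this


end DihedralGroup

def zcenElt (p : ℕ) (F : Type) [Field F] (l : ℕ) (c : ℕ → F) (β : F) : FG p F :=
  1 + (∑ i ∈ Finset.Icc 1 l, algebraMap F (FG p F) (c i) *
      ((of F (Dg p) ((aa p) ^ i) : FG p F) + of F (Dg p) ((aa p) ^ i)⁻¹ - 2)) +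
    algebraMap F (FG p F) β * Ahat p F * of F (Dg p) (bb p)

section

variable {p : ℕ} {F : Type} [Field F]

lemma sub_one_mem_gammaA {h : Dg p} (hh : h ∈ Asub p) : of F (Dg p) h - 1 ∈ gammaA p F :=
  Ideal.subset_span ⟨h, hh, rfl⟩

lemma gammaA_le_ker_lift {χ : Dg p →* F} (hχ : ∀ i, χ (r i) = 1) :
    gammaA p F ≤ RingHom.ker (lift F F (Dg p) χ) := by
  rw [gammaA, Ideal.span_le]
  rintro _ ⟨_, ⟨k, rfl⟩, rfl⟩
  simp [aa, hχ]

lemma Ahat_eq_sum [NeZero p] : Ahat p F = ∑ i, of F (Dg p) (r i) := by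
  simp only [Ahat, aa, r_one_pow]
  exact ZMod.sum_range_natCast (fun i => of F (Dg p) (r i))

lemma Ahat_mul_of_bb [NeZero p] : Ahat p F * of F (Dg p) (bb p) = reflSum F p := by
  rw [Ahat_eq_sum, Finset.sum_mul, reflSum]
  simp only [← map_mul, bb, r_mul_sr, zero_sub]
  exact Equiv.sum_comp (Equiv.neg _) (fun i => of F (Dg p) (sr i))

lemma of_bb_mul_Ahat [NeZero p] : of F (Dg p) (bb p) * Ahat p F = reflSum F p := by
  simp only [Ahat_eq_sum, Finset.mul_sum, reflSum, ← map_mul, bb, sr_mul_r, zero_add]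

lemma Ahat_mem_gammaA [CharP F p] : Ahat p F ∈ gammaA p F := by
  have hp : (p : FG p F) = 0 := by
    rw [← map_natCast (algebraMap F (FG p F)), CharP.cast_eq_zero, map_zero]
  have hsum : Ahat p F = ∑ j ∈ Finset.range p, (of F (Dg p) (aa p ^ j) - 1) := by
    simp [Ahat, Finset.sum_sub_distrib, hp]
  rw [hsum]
  exact Ideal.sum_mem _ fun j _ => sub_one_mem_gammaA (pow_mem (Subgroup.mem_zpowers _) j)

lemma zcenElt_sub_one_mem_gammaA [NeZero p] [CharP F p] (l : ℕ) (c : ℕ → F) (β : F) :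
    zcenElt p F l c β - 1 ∈ gammaA p F := by
  have ha : aa p ∈ Asub p := Subgroup.mem_zpowers _
  -- `gammaA` is only a left ideal, so `Â b` is turned into `b Â`.
  rw [zcenElt, add_assoc, add_sub_cancel_left, mul_assoc, Ahat_mul_of_bb, ← of_bb_mul_Ahat]
  refine add_mem (sum_mem fun i _ => Ideal.mul_mem_left _ _ ?_)
    (Ideal.mul_mem_left _ _ (Ideal.mul_mem_left _ _ Ahat_mem_gammaA))
  rw [← one_add_one_eq_two, add_sub_add_comm]
  exact add_mem (sub_one_mem_gammaA (pow_mem ha i)) (sub_one_mem_gammaA (inv_mem (pow_mem ha i)))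

lemma zcenElt_mem_center [NeZero p] (l : ℕ) (c : ℕ → F) (β : F) :
    zcenElt p F l c β ∈ Subalgebra.center F (FG p F) := by
  have hC : ∀ m : ZMod p,
      of F (Dg p) (r m) + of F (Dg p) (r (-m)) ∈ Subalgebra.center F (FG p F) :=
    fun m => mem_center_of_forall_commute_of fun g => commute_of_of_r_add_of_r_neg g m
  rw [zcenElt, mul_assoc, Ahat_mul_of_bb]
  refine add_mem (add_mem (one_mem _) (sum_mem fun i _ => mul_mem (Subalgebra.algebraMap_mem _ _)
    (sub_mem ?_ (Subalgebra.algebraMap_mem _ 2)))) (mul_mem (Subalgebra.algebraMap_mem _ _)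
    (mem_center_of_forall_commute_of commute_of_reflSum))
  simpa only [aa, r_one_pow, inv_r] using hC i

lemma zcenElt_mem_Zcen [NeZero p] [CharP F p] (l : ℕ) (c : ℕ → F) (β : F) :
    zcenElt p F l c β ∈ Zcen p F :=
  ⟨zcenElt_sub_one_mem_gammaA l c β,
    fun y _ => ((Subalgebra.mem_center_iff.1 (zcenElt_mem_center l c β)) y).symm⟩

lemma zcenElt_eq [NeZero p] {l : ℕ} (hp : p = 2 * l + 1) {f : ZMod p → F}
    (hsymm : ∀ m, f (-m) = f m) (hsum : ∑ m, f m = 1) (β : F) :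
    zcenElt p F l (fun i => f i) β = ∑ m, f m • of F (Dg p) (r m) + β • reflSum F p := by
  have hterm : ∀ i : ℕ, algebraMap F (FG p F) (f i) *
      ((of F (Dg p) ((aa p) ^ i) : FG p F) + of F (Dg p) ((aa p) ^ i)⁻¹ - 2)
      = (f i • of F (Dg p) (r i) + f (-i) • of F (Dg p) (r (-i))) - (f i + f (-i)) • 1 := by
    intro i
    rw [← Algebra.smul_def, aa, r_one_pow, inv_r, hsymm, ← one_add_one_eq_two]
    module
  have hcoeff : ∑ i ∈ Finset.Icc 1 l, (f i + f (-i)) = 1 - f 0 := by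
    rw [← hsum, ZMod.sum_eq_add_sum_Icc hp f, add_sub_cancel_left]
  rw [zcenElt, Finset.sum_congr rfl (fun i _ => hterm i), Finset.sum_sub_distrib,
    ← Finset.sum_smul, hcoeff, mul_assoc, Ahat_mul_of_bb, ← Algebra.smul_def,
    ZMod.sum_eq_add_sum_Icc hp (fun m => f m • of F (Dg p) (r m)), r_zero, map_one]
  module

lemma commute_of_mem_Zcen {x y : FG p F} (hx : x ∈ Zcen p F) (hy : y ∈ gammaA p F) :
    Commute x y := by
  have h : Commute x (1 + y) := hx.2 (1 + y) (by simpa [oneGamma] using hy)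
  simpa using h.sub_right (Commute.one_right x)

lemma exists_eq_zcenElt_of_mem_Zcen [NeZero p] [CharP F p] {l : ℕ} (hp : p = 2 * l + 1)
    {x : FG p F} (hx : x ∈ Zcen p F) : ∃ (c : ℕ → F) (β : F), x = zcenElt p F l c β := by
  have ha : Commute x (of F (Dg p) (aa p)) := by
    simpa using (commute_of_mem_Zcen hx
      (sub_one_mem_gammaA (Subgroup.mem_zpowers (aa p)))).add_right (Commute.one_right x)
  have hw : Commute x (of F (Dg p) (sr (-1)) - of F (Dg p) (sr 0)) := by
    have hmem := Ideal.mul_mem_left _ (of F (Dg p) (bb p))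
      (sub_one_mem_gammaA (F := F) (inv_mem (Subgroup.mem_zpowers (aa p))))
    rw [mul_sub, ← map_mul, mul_one] at hmem
    simpa [bb, aa] using commute_of_mem_Zcen hx hmem
  have h2 : IsUnit (2 : ZMod p) := by
    simpa using (ZMod.isUnit_iff_coprime 2 p).2 (Nat.coprime_two_left.2 ⟨l, hp⟩)
  have hrefl : ∀ j, x.coeff (sr j) = x.coeff (sr 0) :=
    fun j => ZMod.eq_of_periodic (coeff_sr_periodic ha) h2 j 0
  have hsymm : ∀ m, x.coeff (r (-m)) = x.coeff (r m) := fun m => by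
    have h := ZMod.eq_of_periodic (coeff_r_sub_coeff_r_neg_periodic hw) isUnit_one m 0
    simp only [neg_zero, sub_self, sub_eq_zero] at h
    exact h.symm
  have hsum : ∑ m, x.coeff (r m) = 1 := by
    have h := gammaA_le_ker_lift (sign_r F) hx.1
    rw [RingHom.mem_ker, map_sub, map_one, sub_eq_zero, lift_sign_apply] at h
    simpa [hrefl, CharP.cast_eq_zero] using h
  refine ⟨fun i => x.coeff (r i), x.coeff (sr 0), ?_⟩
  rw [zcenElt_eq hp hsymm hsum]
  conv_lhs => rw [eq_sum_coeff_smul x]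
  simp [hrefl, reflSum, Finset.smul_sum]

end

theorem stmt9_general (p : ℕ) (hodd : Odd p)
    (F : Type) [Field F] [CharP F p] :
    ∀ l : ℕ, l = (p - 1) / 2 →
    Zcen p F = {x : FG p F | ∃ (c : ℕ → F) (β : F),
      x = 1 +
        (∑ i ∈ Finset.Icc 1 l, algebraMap F (FG p F) (c i) *
          ((of F (Dg p) ((aa p) ^ i) : FG p F) + of F (Dg p) ((aa p) ^ i)⁻¹ - 2)) +
        algebraMap F (FG p F) β * Ahat p F * of F (Dg p) (bb p)} := by
  intro l hl
  have hp : p = 2 * l + 1 := by obtain ⟨k, rfl⟩ := hodd; omega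
  have : NeZero p := ⟨hodd.pos.ne'⟩
  ext x
  exact ⟨exists_eq_zcenElt_of_mem_Zcen hp, fun ⟨c, β, hx⟩ => hx ▸ zcenElt_mem_Zcen l c β⟩

/-- `Z(1 + Γ(A))` consists exactly of the elements
`1 + Σ_{i=1}^{l} α_i (Ĉ_i - 2) + β Â b` with coefficients in `F`, where
`Ĉ_i = a^i + a^{-i}` and `l = (p-1)/2`. -/
theorem stmt9 (p : ℕ) (hp : p.Prime) (hodd : Odd p)
    (F : Type) [Field F] [Fintype F] [CharP F p] :
    ∀ l : ℕ, l = (p - 1) / 2 →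
    Zcen p F = {x : FG p F | ∃ (c : ℕ → F) (β : F),
      x = 1 +
        (∑ i ∈ Finset.Icc 1 l, algebraMap F (FG p F) (c i) *
          ((of F (Dg p) ((aa p) ^ i) : FG p F) + of F (Dg p) ((aa p) ^ i)⁻¹ - 2)) +
        algebraMap F (FG p F) β * Ahat p F * of F (Dg p) (bb p)} :=
  stmt9_general p hodd F
end
end

section
/- For l = (p−1)/2 and ω_i = (a^i − a^{−i})(1 + b), ω_i' = (a^i − a^{−i})(1 − b), the F-subspace Σ_{i=1}^{l} F ω_i ω_i' of FD_{2p} equals the F-span of { (a − a^{−1})^{2k}(1 − b) : 1 ≤ k ≤ l }, and likewise Σ_{i=1}^{l} F ω_i' ω_i equals the F-span of { (a − a^{−1})^{2k}(1 + b) : 1 ≤ k ≤ l }. -/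
/-! With `u = a²` put `sₙ = uⁿ + u⁻ⁿ - 2 = (aⁿ - a⁻ⁿ)²`. Since `b` anticommutes with `aⁱ - a⁻ⁱ`
and `(1 ∓ b)² = 2(1 ∓ b)`, we get `ωᵢωᵢ' = 2 sᵢ (1 - b)` and `ωᵢ'ωᵢ = 2 sᵢ (1 + b)`.
Expanding `(u + u⁻¹)(uⁿ⁺¹ + u⁻ⁿ⁻¹)` gives `sₙ₊₂ + sₙ = s₁ sₙ₊₁ + 2 s₁ + 2 sₙ₊₁`, so by induction
`s₁, …, sₘ` and `s₁, s₁², …, s₁ᵐ` span the same space for every `m`; multiply on the right by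
`1 ∓ b` and use that `2` is invertible in odd characteristic. -/

noncomputable section

open MonoidAlgebra

/-- `ω_i = (a^i - a^{-i})(1 + b)`. -/
def ww (p : ℕ) (F : Type) [Field F] (i : ℕ) : FG p F :=
  ((of F (Dg p) ((aa p) ^ i) : FG p F) - of F (Dg p) ((aa p) ^ i)⁻¹) *
    (1 + of F (Dg p) (bb p))

/-- `ω_i' = (a^i - a^{-i})(1 - b)`. -/
def ww' (p : ℕ) (F : Type) [Field F] (i : ℕ) : FG p F :=
  ((of F (Dg p) ((aa p) ^ i) : FG p F) - of F (Dg p) ((aa p) ^ i)⁻¹) *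
    (1 - of F (Dg p) (bb p))

/-- `L = ⊕_{i=1}^{l} F ω_i'`. -/
def Lsub (p : ℕ) (F : Type) [Field F] : Submodule F (FG p F) :=
  Submodule.span F {x | ∃ i, 1 ≤ i ∧ i ≤ (p - 1) / 2 ∧ x = ww' p F i}

/-- `U = ⊕_{i=1}^{l} F ω_i`. -/
def Usub (p : ℕ) (F : Type) [Field F] : Submodule F (FG p F) :=
  Submodule.span F {x | ∃ i, 1 ≤ i ∧ i ≤ (p - 1) / 2 ∧ x = ww p F i}

/-- `D = ⊕_{i=1}^{l} F ω_iω_i' ⊕ ⊕_{i=1}^{l} F ω_i'ω_i`. -/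
def Dsub (p : ℕ) (F : Type) [Field F] : Submodule F (FG p F) :=
  Submodule.span F {x | ∃ i, 1 ≤ i ∧ i ≤ (p - 1) / 2 ∧
    (x = ww p F i * ww' p F i ∨ x = ww' p F i * ww p F i)}

lemma setOf_exists_Icc_eq_image {M : Type*} (f : ℕ → M) (m : ℕ) :
    {x | ∃ i, 1 ≤ i ∧ i ≤ m ∧ x = f i} = f '' Set.Icc 1 m := by
  ext x
  simp [eq_comm, and_assoc]

lemma span_image_Icc_mono {R M : Type*} [Semiring R] [AddCommMonoid M] [Module R M]
    (f : ℕ → M) {m m' : ℕ} (h : m ≤ m') :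
    Submodule.span R (f '' Set.Icc 1 m) ≤ Submodule.span R (f '' Set.Icc 1 m') :=
  Submodule.span_mono (Set.image_mono (Set.Icc_subset_Icc_right h))

section SymPow

variable {R A : Type*} [CommRing R] [Ring A] [Algebra R A]

def symPowSubTwo (u : Aˣ) (n : ℕ) : A := ↑(u ^ n) + ↑(u ^ n)⁻¹ - 2

variable (u : Aˣ)

@[simp]
lemma symPowSubTwo_zero : symPowSubTwo u 0 = 0 := by
  rw [symPowSubTwo, pow_zero, inv_one, Units.val_one, ← one_add_one_eq_two, sub_self]

lemma symPowSubTwo_pow (m n : ℕ) : symPowSubTwo (u ^ m) n = symPowSubTwo u (m * n) := by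
  rw [symPowSubTwo, symPowSubTwo, pow_mul]

lemma sq_val_sub_val_inv : ((u : A) - ↑u⁻¹) ^ 2 = symPowSubTwo u 2 := by
  simp only [symPowSubTwo, sq, sub_mul, mul_sub, Units.val_mul, Units.mul_inv,
    Units.inv_mul, mul_inv_rev]
  rw [← one_add_one_eq_two]
  abel

lemma symPowSubTwo_add_two (n : ℕ) :
    symPowSubTwo u (n + 2) =
      symPowSubTwo u 1 * symPowSubTwo u (n + 1) + 2 * symPowSubTwo u 1
        + 2 * symPowSubTwo u (n + 1) - symPowSubTwo u n := by
  have h1 : (u : A) * ↑(u ^ (n + 1))⁻¹ = ↑(u ^ n)⁻¹ := by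
    rw [← Units.val_mul, pow_succ, mul_inv_rev, mul_inv_cancel_left]
  have h2 : (↑u⁻¹ : A) * ↑(u ^ (n + 1)) = ↑(u ^ n) := by
    rw [← Units.val_mul, pow_succ', inv_mul_cancel_left]
  have h3 : (u : A) * ↑(u ^ (n + 1)) = ↑(u ^ (n + 2)) := by
    rw [← Units.val_mul, ← pow_succ']
  have h4 : (↑u⁻¹ : A) * ↑(u ^ (n + 1))⁻¹ = ↑(u ^ (n + 2))⁻¹ := by
    rw [← Units.val_mul, ← mul_inv_rev, ← pow_succ]
  simp only [symPowSubTwo, pow_one, sub_mul, add_mul, mul_sub, mul_add, h1, h2, h3, h4]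
  noncomm_ring

lemma mul_mem_span_of_forall_mem {a x : A} {s t : Set A}
    (h : ∀ y ∈ s, a * y ∈ Submodule.span R t) (hx : x ∈ Submodule.span R s) :
    a * x ∈ Submodule.span R t :=
  (Submodule.span_le (p := (Submodule.span R t).comap (LinearMap.mulLeft R a))).2 h hx

lemma symPowSubTwo_mem_span {i m : ℕ} (h : i ≤ m) :
    symPowSubTwo u i ∈ Submodule.span R (symPowSubTwo u '' Set.Icc 1 m) := by
  rcases Nat.eq_zero_or_pos i with rfl | hi
  · simp
  · exact Submodule.subset_span ⟨i, ⟨hi, h⟩, rfl⟩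

lemma symPowSubTwo_one_mul_mem_span {i m : ℕ} (h : i ≤ m) :
    symPowSubTwo u 1 * symPowSubTwo u i ∈
      Submodule.span R (symPowSubTwo u '' Set.Icc 1 (m + 1)) := by
  obtain _ | j := i
  · simp
  have hmem {k : ℕ} (hk : k ≤ m + 1) := symPowSubTwo_mem_span (R := R) u hk
  have hrec : symPowSubTwo u 1 * symPowSubTwo u (j + 1) =
      symPowSubTwo u (j + 2) + symPowSubTwo u j - 2 * symPowSubTwo u 1
        - 2 * symPowSubTwo u (j + 1) := by
    rw [symPowSubTwo_add_two]; abel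
  rw [hrec, two_mul, two_mul]
  exact sub_mem (sub_mem (add_mem (hmem (by omega)) (hmem (by omega)))
    (add_mem (hmem (by omega)) (hmem (by omega)))) (add_mem (hmem (by omega)) (hmem (by omega)))

lemma symPowSubTwo_one_pow_mem_span {k : ℕ} (hk : 1 ≤ k) :
    symPowSubTwo u 1 ^ k ∈ Submodule.span R (symPowSubTwo u '' Set.Icc 1 k) := by
  induction k, hk using Nat.le_induction with
  | base => simp
  | succ k _ ih =>
    rw [pow_succ']
    refine mul_mem_span_of_forall_mem ?_ ih
    rintro _ ⟨i, ⟨_, hi⟩, rfl⟩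
    exact symPowSubTwo_one_mul_mem_span u hi

lemma symPowSubTwo_mem_span_pow (n : ℕ) :
    symPowSubTwo u n ∈ Submodule.span R ((symPowSubTwo u 1 ^ ·) '' Set.Icc 1 n) := by
  induction n using Nat.twoStepInduction with
  | zero => simp
  | one => exact Submodule.subset_span ⟨1, ⟨le_rfl, le_rfl⟩, pow_one _⟩
  | more n ih₀ ih₁ =>
    have hmono {m : ℕ} (hm : m ≤ n + 2) :=
      span_image_Icc_mono (R := R) (symPowSubTwo u 1 ^ ·) hm
    have hs₁ : symPowSubTwo u 1 ∈
        Submodule.span R ((symPowSubTwo u 1 ^ ·) '' Set.Icc 1 (n + 2)) :=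
      Submodule.subset_span ⟨1, ⟨le_rfl, by omega⟩, pow_one _⟩
    have hmul : symPowSubTwo u 1 * symPowSubTwo u (n + 1) ∈
        Submodule.span R ((symPowSubTwo u 1 ^ ·) '' Set.Icc 1 (n + 2)) := by
      refine mul_mem_span_of_forall_mem ?_ ih₁
      rintro _ ⟨k, ⟨hk, hkn⟩, rfl⟩
      exact Submodule.subset_span ⟨k + 1, ⟨by omega, by omega⟩, pow_succ' _ _⟩
    rw [symPowSubTwo_add_two, two_mul, two_mul]
    exact sub_mem (add_mem (add_mem hmul (add_mem hs₁ hs₁))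
      (add_mem (hmono (by omega) ih₁) (hmono (by omega) ih₁))) (hmono (by omega) ih₀)

theorem span_symPowSubTwo_eq_span_pow (m : ℕ) :
    Submodule.span R (symPowSubTwo u '' Set.Icc 1 m) =
      Submodule.span R ((symPowSubTwo u 1 ^ ·) '' Set.Icc 1 m) := by
  apply le_antisymm <;> rw [Submodule.span_le]
  · rintro _ ⟨i, ⟨_, hi⟩, rfl⟩
    exact span_image_Icc_mono _ hi (symPowSubTwo_mem_span_pow u i)
  · rintro _ ⟨k, ⟨hk, hkm⟩, rfl⟩
    exact span_image_Icc_mono _ hkm (symPowSubTwo_one_pow_mem_span u hk)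

open scoped Pointwise in
theorem span_smul_symPowSubTwo_mul_eq {r : R} (hr : IsUnit r) (c : A) (m : ℕ) :
    Submodule.span R ((fun i => r • (symPowSubTwo u i * c)) '' Set.Icc 1 m) =
      Submodule.span R ((fun k => symPowSubTwo u 1 ^ k * c) '' Set.Icc 1 m) := by
  have hsmul : (fun i => r • (symPowSubTwo u i * c)) '' Set.Icc 1 m =
      r • ((fun i => symPowSubTwo u i * c) '' Set.Icc 1 m) := by
    rw [← Set.image_smul, Set.image_image]
  have hmul (f : ℕ → A) : (fun i => f i * c) = LinearMap.mulRight R c ∘ f := rfl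
  rw [hsmul, Submodule.span_smul_eq_of_isUnit _ r hr, hmul, hmul, Set.image_comp, Set.image_comp,
    Submodule.span_image, Submodule.span_image, span_symPowSubTwo_eq_span_pow]

end SymPow

lemma mul_one_add_mul_mul_one_sub {A : Type*} [Ring A] {t b : A} (hb : b * b = 1)
    (htb : b * t = -(t * b)) : t * (1 + b) * (t * (1 - b)) = 2 * (t ^ 2 * (1 - b)) := by
  have hcomm : (1 + b) * t = t * (1 - b) := by
    rw [add_mul, htb, mul_sub]; noncomm_ring
  have hidem : (1 - b) * (1 - b) = 2 * (1 - b) := by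
    rw [sub_mul, mul_sub, mul_sub, hb]; noncomm_ring
  calc t * (1 + b) * (t * (1 - b)) = t * ((1 + b) * t) * (1 - b) := by noncomm_ring
    _ = t ^ 2 * ((1 - b) * (1 - b)) := by rw [hcomm]; noncomm_ring
    _ = 2 * (t ^ 2 * (1 - b)) := by rw [hidem]; noncomm_ring

lemma mul_one_sub_mul_mul_one_add {A : Type*} [Ring A] {t b : A} (hb : b * b = 1)
    (htb : b * t = -(t * b)) : t * (1 - b) * (t * (1 + b)) = 2 * (t ^ 2 * (1 + b)) := by
  have h := mul_one_add_mul_mul_one_sub (t := t) (b := -b) (by rwa [neg_mul_neg])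
    (by rw [neg_mul, htb, mul_neg])
  rwa [← sub_eq_add_neg, sub_neg_eq_add] at h

namespace MonoidAlgebra

variable {k G : Type*} [CommRing k] [Group G]

lemma of_sub_of_inv_sq (g : G) :
    (of k G g - of k G g⁻¹) ^ 2 = symPowSubTwo ((of k G).toHomUnits g) 2 := by
  rw [← sq_val_sub_val_inv, ← map_inv, MonoidHom.coe_toHomUnits, MonoidHom.coe_toHomUnits]

lemma of_mul_of_sub_of_inv {b g : G} (h : b * g = g⁻¹ * b) :
    of k G b * (of k G g - of k G g⁻¹) = -((of k G g - of k G g⁻¹) * of k G b) := by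
  have h' : b * g⁻¹ = g * b := by
    calc b * g⁻¹ = g * (b * g) * g⁻¹ := by rw [h]; group
      _ = g * b := by group
  rw [mul_sub, sub_mul, ← map_mul, ← map_mul, ← map_mul, ← map_mul, h, h', neg_sub]

end MonoidAlgebra

section Dihedral

variable (p : ℕ) (F : Type) [Field F]

lemma bb_mul_bb : bb p * bb p = 1 := by
  simp [bb]

lemma bb_mul_aa_pow (i : ℕ) : bb p * aa p ^ i = (aa p ^ i)⁻¹ * bb p := by
  simp [aa, bb]

lemma of_bb_mul_of_bb : (of F (Dg p) (bb p) : FG p F) * of F (Dg p) (bb p) = 1 := by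
  rw [← map_mul, bb_mul_bb, map_one]

lemma sq_of_aa_pow_sub_of_inv (i : ℕ) :
    ((of F (Dg p) (aa p ^ i) : FG p F) - of F (Dg p) (aa p ^ i)⁻¹) ^ 2 =
      symPowSubTwo ((of F (Dg p)).toHomUnits (aa p) ^ 2) i := by
  rw [of_sub_of_inv_sq, map_pow, symPowSubTwo_pow, symPowSubTwo_pow, mul_comm]

lemma ww_mul_ww' (i : ℕ) :
    ww p F i * ww' p F i =
      (2 : F) • (symPowSubTwo ((of F (Dg p)).toHomUnits (aa p) ^ 2) i *
        (1 - of F (Dg p) (bb p))) := by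
  rw [ww, ww', mul_one_add_mul_mul_one_sub (of_bb_mul_of_bb p F)
    (of_mul_of_sub_of_inv (bb_mul_aa_pow p i)), sq_of_aa_pow_sub_of_inv, two_mul, two_smul]

lemma ww'_mul_ww (i : ℕ) :
    ww' p F i * ww p F i =
      (2 : F) • (symPowSubTwo ((of F (Dg p)).toHomUnits (aa p) ^ 2) i *
        (1 + of F (Dg p) (bb p))) := by
  rw [ww, ww', mul_one_sub_mul_mul_one_add (of_bb_mul_of_bb p F)
    (of_mul_of_sub_of_inv (bb_mul_aa_pow p i)), sq_of_aa_pow_sub_of_inv, two_mul, two_smul]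

lemma of_aa_sub_of_inv_pow_two_mul (k : ℕ) :
    ((of F (Dg p) (aa p) : FG p F) - of F (Dg p) (aa p)⁻¹) ^ (2 * k) =
      symPowSubTwo ((of F (Dg p)).toHomUnits (aa p) ^ 2) 1 ^ k := by
  rw [pow_mul, ← sq_of_aa_pow_sub_of_inv, pow_one]

end Dihedral

theorem stmt14_general (p : ℕ) (hodd : Odd p)
    (F : Type) [Field F] [CharP F p] :
    ∀ l : ℕ, l = (p - 1) / 2 →
    Submodule.span F {x : FG p F | ∃ i, 1 ≤ i ∧ i ≤ l ∧ x = ww p F i * ww' p F i} =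
      Submodule.span F {x : FG p F | ∃ k, 1 ≤ k ∧ k ≤ l ∧
        x = ((of F (Dg p) (aa p) : FG p F) - of F (Dg p) (aa p)⁻¹) ^ (2 * k) *
              (1 - of F (Dg p) (bb p))} ∧
    Submodule.span F {x : FG p F | ∃ i, 1 ≤ i ∧ i ≤ l ∧ x = ww' p F i * ww p F i} =
      Submodule.span F {x : FG p F | ∃ k, 1 ≤ k ∧ k ≤ l ∧
        x = ((of F (Dg p) (aa p) : FG p F) - of F (Dg p) (aa p)⁻¹) ^ (2 * k) *
              (1 + of F (Dg p) (bb p))} := by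
  intro l _
  have h2 : IsUnit (2 : F) := (Ring.two_ne_zero (by
    rw [ringChar.eq F p]; rintro rfl; exact Nat.not_odd_iff_even.2 even_two hodd)).isUnit
  simp only [ww_mul_ww', ww'_mul_ww, of_aa_sub_of_inv_pow_two_mul, setOf_exists_Icc_eq_image]
  exact ⟨span_smul_symPowSubTwo_mul_eq _ h2 _ l, span_smul_symPowSubTwo_mul_eq _ h2 _ l⟩

/-- `Σ_{i=1}^{l} F ω_iω_i'` equals the `F`-span of
`{(a - a^{-1})^{2k}(1-b) : 1 ≤ k ≤ l}`, and `Σ_{i=1}^{l} F ω_i'ω_i` equals the `F`-span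
of `{(a - a^{-1})^{2k}(1+b) : 1 ≤ k ≤ l}`. -/
theorem stmt14 (p : ℕ) (hp : p.Prime) (hodd : Odd p)
    (F : Type) [Field F] [Fintype F] [CharP F p] :
    ∀ l : ℕ, l = (p - 1) / 2 →
    Submodule.span F {x : FG p F | ∃ i, 1 ≤ i ∧ i ≤ l ∧ x = ww p F i * ww' p F i} =
      Submodule.span F {x : FG p F | ∃ k, 1 ≤ k ∧ k ≤ l ∧
        x = ((of F (Dg p) (aa p) : FG p F) - of F (Dg p) (aa p)⁻¹) ^ (2 * k) *
              (1 - of F (Dg p) (bb p))} ∧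
    Submodule.span F {x : FG p F | ∃ i, 1 ≤ i ∧ i ≤ l ∧ x = ww' p F i * ww p F i} =
      Submodule.span F {x : FG p F | ∃ k, 1 ≤ k ∧ k ≤ l ∧
        x = ((of F (Dg p) (aa p) : FG p F) - of F (Dg p) (aa p)⁻¹) ^ (2 * k) *
              (1 + of F (Dg p) (bb p))} :=
  stmt14_general p hodd F
end
end

section
/- The group 1 + Γ(A) is a nilpotent p-group of order p^{4nl}, where l = (p−1)/2, of exponent p, and its nilpotency class is at most p − 1. -/
/-!
`Γ = Γ(A)` is the kernel of `F[D_{2p}] → F[C₂]` induced by the sign character, so it has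
dimension `2p - 2`; being the augmentation ideal of `A = ⟨a⟩` it is generated by `α = a - 1`,
hence `Γ ^ k = (α ^ k)` and `Γ ^ p = (a ^ p - 1) = 0` in characteristic `p`.

For a two-sided ideal `I` with `I ^ (c + 1) = 0`, the map `u ↦ u - 1` identifies `1 + I` with `I`;
the identity `[u, v] - 1 = ((u - 1)(v - 1) - (v - 1)(u - 1)) u⁻¹ v⁻¹` pushes the `k`-th term of the
lower central series of `1 + I` into `1 + I ^ (k + 1)`, so it dies at step `c`; and in
characteristic `p`, `I ^ p = 0` gives `u ^ p - 1 = (u - 1) ^ p = 0`.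
-/

noncomputable section
open MonoidAlgebra
/-- The sign homomorphism `D_{2p} → C₂`, trivial on rotations. -/
def sgn (p : ℕ) : Dg p →* Multiplicative (ZMod 2) where
  toFun g := match g with
    | DihedralGroup.r _ => 1
    | DihedralGroup.sr _ => Multiplicative.ofAdd 1
  map_one' := rfl
  map_mul' := by
    rintro (i | i) (j | j) <;>
      simp only [DihedralGroup.r_mul_r, DihedralGroup.r_mul_sr, DihedralGroup.sr_mul_r,
        DihedralGroup.sr_mul_sr] <;> decide

/-- `1 + Γ(A)` as a subgroup of the unit group of `FD_{2p}`. -/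
def oneGammaU (p : ℕ) (F : Type) [Field F] : Subgroup (FG p F)ˣ where
  carrier := {u | (u : FG p F) - 1 ∈ gammaA p F}
  one_mem' := by simp
  mul_mem' := by
    intro u v hu hv
    have h : ((↑(u * v) : FG p F)) - 1
        = (u : FG p F) * ((v : FG p F) - 1) + ((u : FG p F) - 1) := by
      push_cast
      noncomm_ring
    show ((↑(u * v) : FG p F)) - 1 ∈ gammaA p F
    rw [h]
    exact (gammaA p F).add_mem (Ideal.mul_mem_left _ _ hv) hu
  inv_mem' := by
    intro u hu
    have h : ((↑u⁻¹ : FG p F)) - 1 = -((↑u⁻¹ : FG p F) * ((u : FG p F) - 1)) := by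
      rw [mul_sub, Units.inv_mul, mul_one, neg_sub]
    show ((↑u⁻¹ : FG p F)) - 1 ∈ gammaA p F
    rw [h]
    exact (gammaA p F).neg_mem (Ideal.mul_mem_left _ _ hu)

open scoped commutatorElement in
theorem Units.val_commutatorElement_sub_one {R : Type*} [Ring R] (u v : Rˣ) :
    ((⁅u, v⁆ : Rˣ) : R) - 1 =
      ((u - 1) * (v - 1) - (v - 1) * (u - 1)) * ((u⁻¹ * v⁻¹ : Rˣ) : R) := by
  have hu : (u : R) * (u⁻¹ : Rˣ) = 1 := Units.mul_inv u
  have hv : (v : R) * (v⁻¹ : Rˣ) = 1 := Units.mul_inv v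
  calc ((⁅u, v⁆ : Rˣ) : R) - 1
      = u * v * (u⁻¹ : Rˣ) * (v⁻¹ : Rˣ) - v * (u * (u⁻¹ : Rˣ)) * (v⁻¹ : Rˣ) := by
        rw [commutatorElement_def, hu, mul_one, hv]; push_cast; rfl
    _ = _ := by push_cast; noncomm_ring

namespace Ideal

variable {R : Type*} [Ring R]

def oneAddUnits (I : Ideal R) : Subgroup Rˣ where
  carrier := {u | (u : R) - 1 ∈ I}
  one_mem' := by simp
  mul_mem' {u v} hu hv := by
    have h : ((u * v : Rˣ) : R) - 1 = u * ((v : R) - 1) + ((u : R) - 1) := by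
      push_cast; noncomm_ring
    simpa only [Set.mem_ofPred_eq, h] using I.add_mem (I.mul_mem_left _ hv) hu
  inv_mem' {u} hu := by
    have h : ((u⁻¹ : Rˣ) : R) - 1 = -(((u⁻¹ : Rˣ) : R) * ((u : R) - 1)) := by
      rw [mul_sub, Units.inv_mul, mul_one, neg_sub]
    simpa only [Set.mem_ofPred_eq, h] using I.neg_mem (I.mul_mem_left _ hu)

theorem mem_oneAddUnits {I : Ideal R} {u : Rˣ} : u ∈ I.oneAddUnits ↔ (u : R) - 1 ∈ I := Iff.rfl

theorem oneAddUnits_bot : (⊥ : Ideal R).oneAddUnits = ⊥ := by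
  ext u
  rw [mem_oneAddUnits, mem_bot, sub_eq_zero, Subgroup.mem_bot, Units.val_eq_one]

def oneAddUnitsEquiv {I : Ideal R} (hI : ∀ x ∈ I, IsNilpotent x) : I.oneAddUnits ≃ I where
  toFun u := ⟨((u : Rˣ) : R) - 1, u.2⟩
  invFun x := ⟨(hI x x.2).isUnit_one_add.unit, by simp [mem_oneAddUnits]⟩
  left_inv u := by ext; simp
  right_inv x := by ext; simp

theorem natCard_oneAddUnits {I : Ideal R} (hI : ∀ x ∈ I, IsNilpotent x) :
    Nat.card I.oneAddUnits = Nat.card I :=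
  Nat.card_congr (oneAddUnitsEquiv hI)

theorem exponent_oneAddUnits_dvd {I : Ideal R} {p : ℕ} [Fact p.Prime] [CharP R p]
    (hI : I ^ p = ⊥) : Monoid.exponent I.oneAddUnits ∣ p := by
  refine Monoid.exponent_dvd_of_forall_pow_eq_one fun u ↦ Subtype.ext <| Units.ext ?_
  have h : (((u : Rˣ) : R) - 1) ^ p = 0 := by
    rw [← mem_bot, ← hI]
    exact pow_mem_pow u.2 p
  rw [sub_pow_char_of_commute _ (Commute.one_right _), one_pow, sub_eq_zero] at h
  simpa using h

open scoped commutatorElement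

variable (I : Ideal R) [I.IsTwoSided]

theorem commutatorElement_mem_oneAddUnits_pow_succ {k : ℕ} {u v : Rˣ}
    (hu : u ∈ (I ^ k).oneAddUnits) (hv : v ∈ I.oneAddUnits) :
    ⁅u, v⁆ ∈ (I ^ (k + 1)).oneAddUnits := by
  rw [mem_oneAddUnits, Units.val_commutatorElement_sub_one]
  refine mul_mem_right _ _ (sub_mem ?_ ?_)
  · rw [Submodule.pow_succ]
    exact mul_mem_mul hu hv
  · rw [IsTwoSided.pow_succ]
    exact mul_mem_mul hv hu

theorem lowerCentralSeries_oneAddUnits_le (k : ℕ) :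
    I.oneAddUnits.lowerCentralSeries k ≤ (I ^ (k + 1)).oneAddUnits := by
  induction k with
  | zero => rw [Subgroup.lowerCentralSeries_zero, zero_add, Submodule.pow_one]
  | succ k ih =>
    rw [Subgroup.lowerCentralSeries_succ, Subgroup.commutator_le]
    exact fun u hu v hv ↦ commutatorElement_mem_oneAddUnits_pow_succ I (ih hu) hv

theorem lowerCentralSeries_oneAddUnits_eq_bot {c : ℕ} (hI : I ^ (c + 1) = ⊥) :
    (⊤ : Subgroup I.oneAddUnits).lowerCentralSeries c = ⊥ := by
  rw [← Subgroup.map_subtype_inj, Subgroup.map_bot, Subgroup.top_subtype_lowerCentralSeries,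
    eq_bot_iff, ← oneAddUnits_bot, ← hI]
  exact lowerCentralSeries_oneAddUnits_le I c

end Ideal

namespace MonoidAlgebra

instance charP {k G : Type*} [Field k] [Monoid G] (p : ℕ) [CharP k p] : CharP k[G] p :=
  charP_of_injective_algebraMap' k p

theorem finrank_eq_card (k G : Type*) [Field k] [Monoid G] [Fintype G] :
    Module.finrank k k[G] = Fintype.card G :=
  Module.finrank_eq_card_basis (MonoidAlgebra.basis G k)

theorem mapDomainAlgHom_surjective (k : Type*) {M N : Type*} [CommSemiring k] [Monoid M]
    [Monoid N] {f : M →* N} (hf : Function.Surjective f) :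
    Function.Surjective (mapDomainAlgHom k k f) := by
  intro y
  induction y using MonoidAlgebra.induction_on with
  | of n =>
    obtain ⟨m, rfl⟩ := hf n
    exact ⟨of k M m, by simp⟩
  | add y z hy hz =>
    obtain ⟨y, rfl⟩ := hy
    obtain ⟨z, rfl⟩ := hz
    exact ⟨y + z, map_add _ y z⟩
  | smul c y hy =>
    obtain ⟨y, rfl⟩ := hy
    exact ⟨c • y, map_smul _ c y⟩

theorem span_image_of_sub_one_zpowers (k : Type*) {G : Type*} [Ring k] [Group G] (g : G) :
    Ideal.span ((fun h ↦ of k G h - 1) '' (Subgroup.zpowers g : Set G)) =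
      Ideal.span {of k G g - 1} := by
  refine le_antisymm (Ideal.span_le.mpr ?_) (Ideal.span_mono ?_)
  · rintro _ ⟨h, hh, rfl⟩
    have hg : Subgroup.zpowers g ≤
        (Ideal.span {of k G g - 1}).oneAddUnits.comap (of k G).toHomUnits :=
      Subgroup.zpowers_le.mpr (Ideal.subset_span rfl)
    exact hg hh
  · exact Set.singleton_subset_iff.mpr ⟨g, Subgroup.mem_zpowers g, rfl⟩

end MonoidAlgebra

section Dihedral

open DihedralGroup

variable (p : ℕ) (F : Type) [Field F]

theorem r_mem_Asub (i : ZMod p) : r i ∈ Asub p :=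
  Subgroup.mem_zpowers_iff.mpr ⟨(i.cast : ℤ), by rw [aa, r_one_zpow, ZMod.intCast_zmod_cast]⟩

theorem Asub_le_ker_sgn : Asub p ≤ (sgn p).ker :=
  Subgroup.zpowers_le.mpr rfl

theorem sgn_surjective : Function.Surjective (sgn p) := by
  intro s
  obtain rfl | rfl : s = 1 ∨ s = Multiplicative.ofAdd 1 := by revert s; decide
  exacts [⟨r 0, rfl⟩, ⟨sr 0, rfl⟩]

theorem gammaA_le_ker_sgn : gammaA p F ≤ RingHom.ker (mapDomainAlgHom F F (sgn p)) := by
  refine Ideal.span_le.mpr ?_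
  rintro _ ⟨h, hh, rfl⟩
  have hsgn : sgn p h = 1 := Asub_le_ker_sgn p hh
  rw [SetLike.mem_coe, RingHom.mem_ker, map_sub, map_one, sub_eq_zero]
  simp [hsgn, MonoidAlgebra.one_def]

theorem gammaA_sup_span_eq_top :
    (gammaA p F).restrictScalars F ⊔ Submodule.span F (Set.range ![1, of F (Dg p) (bb p)]) = ⊤ := by
  rw [eq_top_iff]
  rintro x -
  induction x using MonoidAlgebra.induction_on with
  | of g =>
    have hΓ (i : ZMod p) : of F (Dg p) (r i) - 1 ∈ gammaA p F :=
      Ideal.subset_span ⟨r i, r_mem_Asub p i, rfl⟩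
    rcases g with i | i
    · rw [← sub_add_cancel (of F (Dg p) (r i)) 1]
      exact Submodule.add_mem_sup (hΓ i) (Submodule.subset_span ⟨0, rfl⟩)
    · have hsr : of F (Dg p) (sr i) =
          of F (Dg p) (bb p) * (of F (Dg p) (r i) - 1) + of F (Dg p) (bb p) := by
        rw [mul_sub, mul_one, sub_add_cancel, ← map_mul, bb, sr_mul_r, zero_add]
      rw [hsr]
      exact Submodule.add_mem_sup (Ideal.mul_mem_left _ _ (hΓ i)) (Submodule.subset_span ⟨1, rfl⟩)
  | add x y hx hy => exact add_mem hx hy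
  | smul c x hx => exact Submodule.smul_mem _ c hx

variable [NeZero p]

theorem finrank_ker_mapDomainAlgHom_sgn :
    Module.finrank F ((RingHom.ker (mapDomainAlgHom F F (sgn p))).restrictScalars F) =
      2 * p - 2 := by
  have h : Module.finrank F (LinearMap.range (mapDomainAlgHom F F (sgn p)).toLinearMap) +
      Module.finrank F ((RingHom.ker (mapDomainAlgHom F F (sgn p))).restrictScalars F) =
      Module.finrank F (FG p F) :=
    LinearMap.finrank_range_add_finrank_ker _
  rw [LinearMap.range_eq_top.mpr (MonoidAlgebra.mapDomainAlgHom_surjective F (sgn_surjective p)),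
    finrank_top, MonoidAlgebra.finrank_eq_card, MonoidAlgebra.finrank_eq_card,
    Fintype.card_multiplicative, ZMod.card, DihedralGroup.card] at h
  omega

theorem gammaA_eq_ker_sgn : gammaA p F = RingHom.ker (mapDomainAlgHom F F (sgn p)) := by
  refine Submodule.restrictScalars_injective F _ _ <|
    Submodule.eq_of_le_of_finrank_le (gammaA_le_ker_sgn p F) ?_
  set W := Submodule.span F (Set.range ![1, of F (Dg p) (bb p)])
  have hsup := Submodule.finrank_add_le_finrank_add_finrank ((gammaA p F).restrictScalars F) W
  rw [gammaA_sup_span_eq_top, finrank_top, MonoidAlgebra.finrank_eq_card,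
    DihedralGroup.card] at hsup
  have hW : Module.finrank F W ≤ 2 := finrank_range_le_card _
  have := hsup.trans (Nat.add_le_add_left hW _)
  rw [finrank_ker_mapDomainAlgHom_sgn]
  omega

instance : (gammaA p F).IsTwoSided := gammaA_eq_ker_sgn p F ▸ inferInstance

theorem natCard_gammaA [Fintype F] : Nat.card (gammaA p F) = Fintype.card F ^ (2 * p - 2) := by
  calc Nat.card (gammaA p F) = Nat.card ((gammaA p F).restrictScalars F) := rfl
    _ = Fintype.card F ^ (2 * p - 2) := by
      rw [Module.natCard_eq_pow_finrank (K := F), gammaA_eq_ker_sgn, Nat.card_eq_fintype_card,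
        finrank_ker_mapDomainAlgHom_sgn]

theorem gammaA_pow_eq_bot [Fact p.Prime] [CharP F p] : gammaA p F ^ p = ⊥ := by
  have hspan : gammaA p F = Ideal.span {of F (Dg p) (aa p) - 1} :=
    MonoidAlgebra.span_image_of_sub_one_zpowers F (aa p)
  have : (Ideal.span {of F (Dg p) (aa p) - 1}).IsTwoSided := hspan ▸ inferInstance
  rw [hspan, Ideal.span_singleton_pow, sub_pow_char_of_commute _ (Commute.one_right _), one_pow,
    ← map_pow, aa, r_one_pow_n, map_one, sub_self, Ideal.span_singleton_eq_bot]

theorem natCard_oneGammaU [Fact p.Prime] [CharP F p] [Fintype F] :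
    Nat.card (oneGammaU p F) = Fintype.card F ^ (2 * p - 2) := by
  -- `oneGammaU p F` is definitionally `(gammaA p F).oneAddUnits`.
  refine (Ideal.natCard_oneAddUnits fun x hx ↦ ⟨p, ?_⟩).trans (natCard_gammaA p F)
  rw [← Ideal.mem_bot, ← gammaA_pow_eq_bot p F]
  exact Ideal.pow_mem_pow hx p

end Dihedral

/-- `1 + Γ(A)` is a nilpotent `p`-group of order `p^{4nl}`,
`l = (p-1)/2`, of exponent `p`, and its nilpotency class is at most `p - 1`. -/
theorem stmt16 (p n : ℕ) (hp : p.Prime) (hodd : Odd p)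
    (F : Type) [Field F] [Fintype F] [CharP F p] (hcard : Fintype.card F = p ^ n) :
    ∀ l : ℕ, l = (p - 1) / 2 →
      Nat.card (oneGammaU p F) = p ^ (4 * n * l) ∧
      IsPGroup p (oneGammaU p F) ∧
      Monoid.exponent (oneGammaU p F) = p ∧
      ∃ hnil : Group.IsNilpotent (oneGammaU p F),
        @Group.nilpotencyClass (oneGammaU p F) _ ≤ p - 1 := by
  intro l hl
  have : Fact p.Prime := ⟨hp⟩
  have hcardU : Nat.card (oneGammaU p F) = p ^ (4 * n * l) := by
    have : 2 * p - 2 = 4 * l := by obtain ⟨m, rfl⟩ := hodd; omega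
    rw [natCard_oneGammaU, hcard, ← pow_mul, this]
    ring
  have : Finite (oneGammaU p F) := Nat.finite_of_card_ne_zero <| by
    rw [natCard_oneGammaU]; exact (pow_pos Fintype.card_pos _).ne'
  have : Nontrivial (oneGammaU p F) := Finite.one_lt_card_iff_nontrivial.mp <| by
    rw [natCard_oneGammaU]; exact Nat.one_lt_pow (by have := hp.two_le; omega) Fintype.one_lt_card
  have hexp : Monoid.exponent (oneGammaU p F) ∣ p :=
    Ideal.exponent_oneAddUnits_dvd (gammaA_pow_eq_bot p F)
  have hlcs : (⊤ : Subgroup (oneGammaU p F)).lowerCentralSeries (p - 1) = ⊥ :=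
    (gammaA p F).lowerCentralSeries_oneAddUnits_eq_bot <| by
      rw [Nat.sub_add_cancel hp.one_le]; exact gammaA_pow_eq_bot p F
  have hnil : Group.IsNilpotent (oneGammaU p F) :=
    Subgroup.nilpotent_iff_lowerCentralSeries.mpr ⟨_, hlcs⟩
  refine ⟨hcardU, IsPGroup.of_card hcardU, ?_, hnil,
    Subgroup.lowerCentralSeries_eq_bot_iff_nilpotencyClass_le.mp hlcs⟩
  exact ((Nat.dvd_prime hp).mp hexp).resolve_left
    fun h ↦ not_subsingleton _ (Monoid.exp_eq_one_iff.mp h)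
end
end
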